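/- Let G be a totally disconnected locally compact Hausdorff topological group, g ∈ G, and U a compact open subgroup of G. Then there exists N ≥ 0 such that the compact open subgroup V = ⋂_{i=0}^{N} gⁱUg⁻ⁱ is tidy above for g. -/

import Mathlib

open MeasureTheory Pointwise

variable {G : Type*}

/-- The conjugate subgroup `gUg⁻¹`. -/
def conjSubgroup [Group G] (g : G) (U : Subgroup G) : Subgroup G :=
  U.map (MulAut.conj g).toMonoidHom

/-- A subgroup is compact open if its carrier set is compact and open. -/
def Subgroup.IsCompactOpen [Group G] [TopologicalSpace G] (U : Subgroup G) : Prop :=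
  IsCompact (U : Set G) ∧ IsOpen (U : Set G)

/-- `U₊ = ⋂_{n ≥ 0} gⁿ U g⁻ⁿ`. -/
def plusSubgroup [Group G] (g : G) (U : Subgroup G) : Subgroup G :=
  ⨅ n : ℕ, conjSubgroup (g ^ n) U

/-- `U₋ = ⋂_{n ≥ 0} g⁻ⁿ U gⁿ`. -/
def minusSubgroup [Group G] (g : G) (U : Subgroup G) : Subgroup G :=
  ⨅ n : ℕ, conjSubgroup (g⁻¹ ^ n) U

/-- `U` is tidy above for `g` if `[gU₊g⁻¹ : U₊] = [gUg⁻¹ : gUg⁻¹ ∩ U]`. -/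
def TidyAbove [Group G] (g : G) (U : Subgroup G) : Prop :=
  (plusSubgroup g U).relIndex (conjSubgroup g (plusSubgroup g U)) = U.relIndex (conjSubgroup g U)

/-- `U₊₊ = ⋃_{n ≥ 0} gⁿ U₊ g⁻ⁿ` as a set. -/
def plusPlusSet [Group G] (g : G) (U : Subgroup G) : Set G :=
  ⋃ n : ℕ, ((conjSubgroup (g ^ n) (plusSubgroup g U) : Subgroup G) : Set G)

/-- `U₋₋ = ⋃_{n ≥ 0} g⁻ⁿ U₋ gⁿ` as a set. -/
def minusMinusSet [Group G] (g : G) (U : Subgroup G) : Set G :=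
  ⋃ n : ℕ, ((conjSubgroup (g⁻¹ ^ n) (minusSubgroup g U) : Subgroup G) : Set G)

/-- `U` is tidy below for `g` if `U₊₊` and `U₋₋` are closed. -/
def TidyBelow [Group G] [TopologicalSpace G] (g : G) (U : Subgroup G) : Prop :=
  IsClosed (plusPlusSet g U) ∧ IsClosed (minusMinusSet g U)

/-- `U` is tidy for `g` if it is tidy above and tidy below for `g`. -/
def Tidy [Group G] [TopologicalSpace G] (g : G) (U : Subgroup G) : Prop :=
  TidyAbove g U ∧ TidyBelow g U

/-!
Write `Vₙ = ⋂_{i ≤ n} gⁱUg⁻ⁱ` and `Q = gU₊g⁻¹ = ⋂_{i ≥ 1} gⁱUg⁻ⁱ`. Every `Vₙ` has the same `U₊`, and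
`U₊ = U ∩ Q`, so the left side of the tidiness equation for `Vₙ` is `[Q : Q ∩ U]`, while the right
side is `[gVₙg⁻¹ : gVₙg⁻¹ ∩ U]` because `Vₙ ∩ gVₙg⁻¹ = U ∩ gVₙg⁻¹`. The compact sets `gVₙg⁻¹`
decrease to `Q`, which lies in the open set `QU`; by compactness `gVₙg⁻¹ ⊆ QU` for some `n`, and
then every coset of `U` met by `gVₙg⁻¹` is already met by `Q`, which equates the two indices.
-/

theorem Subgroup.relIndex_eq_of_le_of_subset_mul [Group G] {U Q W : Subgroup G} (hQW : Q ≤ W)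
    (hWQU : (W : Set G) ⊆ (Q : Set G) * (U : Set G)) :
    U.relIndex Q = U.relIndex W := by
  let e := quotientSubgroupOfEmbeddingOfLE U hQW
  have he : Function.Surjective e := by
    rintro ⟨w⟩
    obtain ⟨q, hq, u, hu, hqu⟩ := hWQU w.2
    refine ⟨(⟨q, hq⟩ : Q), QuotientGroup.eq.2 ?_⟩
    simpa [mem_subgroupOf, ← hqu] using hu
  exact Nat.card_congr (Equiv.ofBijective e ⟨e.injective, he⟩)

def truncPlusSubgroup [Group G] (g : G) (U : Subgroup G) (N : ℕ) : Subgroup G :=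
  ⨅ i : Fin (N + 1), conjSubgroup (g ^ (i : ℕ)) U

section Algebra

variable [Group G] {g x : G} {U : Subgroup G}

theorem mem_conjSubgroup : x ∈ conjSubgroup g U ↔ g⁻¹ * x * g ∈ U := by
  rw [conjSubgroup, Subgroup.mem_map_equiv, MulAut.conj_symm_apply]

theorem mem_plusSubgroup : x ∈ plusSubgroup g U ↔ ∀ n : ℕ, (g ^ n)⁻¹ * x * g ^ n ∈ U := by
  simp only [plusSubgroup, Subgroup.mem_iInf, mem_conjSubgroup]

theorem mem_truncPlusSubgroup {N : ℕ} :
    x ∈ truncPlusSubgroup g U N ↔ ∀ i ≤ N, (g ^ i)⁻¹ * x * g ^ i ∈ U := by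
  simp only [truncPlusSubgroup, Subgroup.mem_iInf, mem_conjSubgroup, Fin.forall_iff,
    Nat.lt_succ_iff]

theorem conjSubgroup_mono (g : G) : Monotone (conjSubgroup g) :=
  fun _ _ h => Subgroup.map_mono h

theorem conjSubgroup_iInf {ι : Sort*} (g : G) (H : ι → Subgroup G) :
    conjSubgroup g (⨅ i, H i) = ⨅ i, conjSubgroup g (H i) := by
  ext x
  simp only [mem_conjSubgroup, Subgroup.mem_iInf]

theorem inf_conjSubgroup_plusSubgroup (g : G) (U : Subgroup G) :
    U ⊓ conjSubgroup g (plusSubgroup g U) = plusSubgroup g U := by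
  ext x
  rw [Subgroup.mem_inf, mem_conjSubgroup, mem_plusSubgroup, mem_plusSubgroup]
  refine (and_congr (by simp) (forall_congr' fun n => ?_)).trans Nat.and_forall_add_one
  simp [pow_succ', mul_assoc]

theorem truncPlusSubgroup_le_self (N : ℕ) : truncPlusSubgroup g U N ≤ U := fun x hx => by
  simpa using mem_truncPlusSubgroup.1 hx 0 (Nat.zero_le N)

theorem antitone_truncPlusSubgroup : Antitone (truncPlusSubgroup g U) :=
  fun _ _ hMN _ hx =>
    mem_truncPlusSubgroup.2 fun i hi => mem_truncPlusSubgroup.1 hx i (hi.trans hMN)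

theorem plusSubgroup_le_truncPlusSubgroup (N : ℕ) : plusSubgroup g U ≤ truncPlusSubgroup g U N :=
  fun _ hx => mem_truncPlusSubgroup.2 fun i _ => mem_plusSubgroup.1 hx i

theorem iInf_truncPlusSubgroup : ⨅ N, truncPlusSubgroup g U N = plusSubgroup g U :=
  le_antisymm
    (fun _ hx => mem_plusSubgroup.2 fun n =>
      mem_truncPlusSubgroup.1 (Subgroup.mem_iInf.1 hx n) n le_rfl)
    (le_iInf plusSubgroup_le_truncPlusSubgroup)

theorem plusSubgroup_truncPlusSubgroup (N : ℕ) :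
    plusSubgroup g (truncPlusSubgroup g U N) = plusSubgroup g U := by
  refine le_antisymm (fun x hx => ?_) (fun x hx => ?_)
  · exact mem_plusSubgroup.2 fun n =>
      truncPlusSubgroup_le_self N (mem_plusSubgroup.1 hx n)
  · refine mem_plusSubgroup.2 fun n => mem_truncPlusSubgroup.2 fun i _ => ?_
    simpa [pow_add, mul_assoc] using mem_plusSubgroup.1 hx (n + i)

theorem truncPlusSubgroup_inf_conjSubgroup (N : ℕ) :
    truncPlusSubgroup g U N ⊓ conjSubgroup g (truncPlusSubgroup g U N) =
      U ⊓ conjSubgroup g (truncPlusSubgroup g U N) := by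
  refine le_antisymm (inf_le_inf_right _ (truncPlusSubgroup_le_self N)) ?_
  rintro x ⟨hxU, hxW⟩
  refine ⟨mem_truncPlusSubgroup.2 fun i hi => ?_, hxW⟩
  cases i with
  | zero => simpa using hxU
  | succ j =>
    simpa [pow_succ', mul_assoc] using
      mem_truncPlusSubgroup.1 (mem_conjSubgroup.1 hxW) j (Nat.le_of_succ_le hi)

theorem tidyAbove_truncPlusSubgroup_of_subset_mul {N : ℕ}
    (h : (conjSubgroup g (truncPlusSubgroup g U N) : Set G) ⊆
      (conjSubgroup g (plusSubgroup g U) : Set G) * (U : Set G)) :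
    TidyAbove g (truncPlusSubgroup g U N) := by
  rw [TidyAbove, plusSubgroup_truncPlusSubgroup]
  set Q := conjSubgroup g (plusSubgroup g U)
  set W := conjSubgroup g (truncPlusSubgroup g U N)
  calc (plusSubgroup g U).relIndex Q
      = (U ⊓ Q).relIndex Q := by rw [inf_conjSubgroup_plusSubgroup]
    _ = U.relIndex W := by
        rw [Subgroup.inf_relIndex_right]
        exact Subgroup.relIndex_eq_of_le_of_subset_mul
          (conjSubgroup_mono g (plusSubgroup_le_truncPlusSubgroup N)) h
    _ = (truncPlusSubgroup g U N).relIndex W := by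
        rw [← Subgroup.inf_relIndex_right U, ← truncPlusSubgroup_inf_conjSubgroup,
          Subgroup.inf_relIndex_right]

end Algebra

section Topology

variable [Group G] [TopologicalSpace G] [ContinuousMul G]

theorem Subgroup.IsCompactOpen.conj {U : Subgroup G} (hU : U.IsCompactOpen) (g : G) :
    (conjSubgroup g U).IsCompactOpen := by
  have himage : (conjSubgroup g U : Set G) = (fun x => g * x * g⁻¹) '' U := by
    ext x
    simp [conjSubgroup, MulAut.conj_apply]
  have hpreimage : (conjSubgroup g U : Set G) = (fun x => g⁻¹ * x * g) ⁻¹' U := by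
    ext x
    exact mem_conjSubgroup
  exact ⟨himage ▸ hU.1.image (by fun_prop), hpreimage ▸ hU.2.preimage (by fun_prop)⟩

theorem Subgroup.IsCompactOpen.iInf {ι : Type*} [Finite ι] [Nonempty ι] {H : ι → Subgroup G}
    (hH : ∀ i, (H i).IsCompactOpen) : (⨅ i, H i).IsCompactOpen := by
  have hopen : IsOpen ((⨅ i, H i : Subgroup G) : Set G) := by
    rw [Subgroup.coe_iInf]
    exact isOpen_iInter_of_finite fun i => (hH i).2
  obtain ⟨i⟩ := ‹Nonempty ι›
  exact ⟨(hH i).1.of_isClosed_subset (Subgroup.isClosed_of_isOpen _ hopen) (iInf_le H i), hopen⟩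

theorem isCompactOpen_truncPlusSubgroup (g : G) {U : Subgroup G} (hU : U.IsCompactOpen)
    (N : ℕ) : (truncPlusSubgroup g U N).IsCompactOpen :=
  Subgroup.IsCompactOpen.iInf fun _ => hU.conj _

theorem exists_conjSubgroup_truncPlusSubgroup_subset_mul (g : G) {U : Subgroup G}
    (hU : U.IsCompactOpen) :
    ∃ N, (conjSubgroup g (truncPlusSubgroup g U N) : Set G) ⊆
      (conjSubgroup g (plusSubgroup g U) : Set G) * (U : Set G) := by
  have hcompact N := (isCompactOpen_truncPlusSubgroup g hU N).conj g
  have hanti : Antitone fun N => (conjSubgroup g (truncPlusSubgroup g U N) : Set G) :=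
    fun _ _ h => conjSubgroup_mono g (antitone_truncPlusSubgroup h)
  refine exists_subset_nhds_of_isCompact' hanti.directed_ge (fun N => (hcompact N).1)
    (fun N => Subgroup.isClosed_of_isOpen _ (hcompact N).2) fun x hx => ?_
  rw [← Subgroup.coe_iInf, ← conjSubgroup_iInf, iInf_truncPlusSubgroup] at hx
  exact hU.2.mul_left.mem_nhds (Set.subset_mul_left _ U.one_mem hx)

end Topology

theorem exists_finite_intersection_tidyAbove_general
    [Group G] [TopologicalSpace G] [IsTopologicalGroup G]
    (g : G) (U : Subgroup G) (hU : U.IsCompactOpen) :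
    ∃ N : ℕ, (⨅ i : Fin (N + 1), conjSubgroup (g ^ (i : ℕ)) U).IsCompactOpen ∧
      TidyAbove g (⨅ i : Fin (N + 1), conjSubgroup (g ^ (i : ℕ)) U) := by
  obtain ⟨N, hN⟩ := exists_conjSubgroup_truncPlusSubgroup_subset_mul g hU
  exact ⟨N, isCompactOpen_truncPlusSubgroup g hU N, tidyAbove_truncPlusSubgroup_of_subset_mul hN⟩

/-- For any compact open `U` there is `N` such that
`V = ⋂_{i=0}^{N} gⁱUg⁻ⁱ` is a compact open subgroup tidy above for `g`. -/
theorem exists_finite_intersection_tidyAbove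
    [Group G] [TopologicalSpace G] [IsTopologicalGroup G] [LocallyCompactSpace G] [T2Space G]
    [TotallyDisconnectedSpace G]
    (g : G) (U : Subgroup G) (hU : U.IsCompactOpen) :
    ∃ N : ℕ, (⨅ i : Fin (N + 1), conjSubgroup (g ^ (i : ℕ)) U).IsCompactOpen ∧
      TidyAbove g (⨅ i : Fin (N + 1), conjSubgroup (g ^ (i : ℕ)) U) :=
  exists_finite_intersection_tidyAbove_general g U hU
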